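/- Let Φ be a flow on S^{d-1} commuting with the antipodal map, and let M be a chain transitive set of the induced flow on ℝP^{d-1}. Then the preimage {v ∈ S^{d-1} : p(v) ∈ M} is the union of at most two chain transitive sets M⁺ and M⁻ for the flow on S^{d-1}, and M⁺ = -M⁻. -/

import Mathlib

open Metric Finset

noncomputable section

abbrev Vec (d : ℕ) := EuclideanSpace ℝ (Fin d)

def ChainIn {X : Type*} [MetricSpace X] (Φ : ℝ → X → X) (S : Set X)
    (ε T : ℝ) (x y : X) : Prop :=
  ∃ (n : ℕ) (u : ℕ → X) (t : ℕ → ℝ), 1 ≤ n ∧ u 0 = x ∧ u n = y ∧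
    (∀ i ≤ n, u i ∈ S) ∧ (∀ i < n, T ≤ t i) ∧
    ∀ i < n, dist (Φ (t i) (u i)) (u (i + 1)) < ε

def OmegaIn {X : Type*} [MetricSpace X] (Φ : ℝ → X → X) (S : Set X) (x : X) : Set X :=
  {y | ∀ ε T : ℝ, 0 < ε → 0 < T → ChainIn Φ S ε T x y}

def ChainTransOn {X : Type*} [MetricSpace X] (Φ : ℝ → X → X) (S A : Set X) : Prop :=
  ∀ x ∈ A, ∀ y ∈ A, y ∈ OmegaIn Φ S x

structure IsFlow {X : Type*} [MetricSpace X] (Φ : ℝ → X → X) : Prop where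
  cont : Continuous fun q : ℝ × X => Φ q.1 q.2
  init : ∀ x, Φ 0 x = x
  comp : ∀ s t x, Φ (s + t) x = Φ s (Φ t x)

def sphere1 (d : ℕ) : Set (Vec d) := {v | ‖v‖ = 1}

structure IsLinearFlow (d : ℕ) (Φ : ℝ → Vec d → Vec d) : Prop where
  cont : Continuous fun q : ℝ × Vec d => Φ q.1 q.2
  lin : ∀ t, IsLinearMap ℝ (Φ t)
  init : ∀ x, Φ 0 x = x
  comp : ∀ s t x, Φ (s + t) x = Φ s (Φ t x)

def sphFlow {d : ℕ} (Φ : ℝ → Vec d → Vec d) : ℝ → Vec d → Vec d :=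
  fun t v => ‖Φ t v‖⁻¹ • Φ t v

abbrev PVec (d : ℕ) := WithLp 2 (Vec d × ℝ)

def emb {d : ℕ} (v : Vec d) (r : ℝ) : PVec d := (WithLp.equiv 2 (Vec d × ℝ)).symm (v, r)

def piP {d : ℕ} (v : Vec d) : PVec d := ‖emb v 1‖⁻¹ • emb v 1

def extFlow {d : ℕ} (Φ : ℝ → Vec d → Vec d) : ℝ → PVec d → PVec d :=
  fun t p => emb (Φ t ((WithLp.equiv 2 (Vec d × ℝ)) p).1) ((WithLp.equiv 2 (Vec d × ℝ)) p).2

def poinFlow {d : ℕ} (Φ : ℝ → Vec d → Vec d) : ℝ → PVec d → PVec d :=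
  fun t p => ‖extFlow Φ t p‖⁻¹ • extFlow Φ t p

def openHemi (d : ℕ) : Set (PVec d) :=
  {p | ‖p‖ = 1 ∧ 0 < ((WithLp.equiv 2 (Vec d × ℝ)) p).2}

def closedHemi (d : ℕ) : Set (PVec d) :=
  {p | ‖p‖ = 1 ∧ 0 ≤ ((WithLp.equiv 2 (Vec d × ℝ)) p).2}

def matFlow (d : ℕ) (A : Matrix (Fin d) (Fin d) ℝ) : ℝ → Vec d → Vec d :=
  fun t x => (EuclideanSpace.equiv (Fin d) ℝ).symm
    ((NormedSpace.exp (t • A)).mulVec (EuclideanSpace.equiv (Fin d) ℝ x))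

structure IsProjQuot {P : Type*} [MetricSpace P] (d : ℕ) (p : Vec d → P)
    (Φ : ℝ → Vec d → Vec d) (Ψ : ℝ → P → P) : Prop where
  surj : ∀ q : P, ∃ v ∈ sphere1 d, p v = q
  fib : ∀ v ∈ sphere1 d, ∀ w ∈ sphere1 d, (p v = p w ↔ v = w ∨ v = -w)
  dist_eq : ∀ v ∈ sphere1 d, ∀ w ∈ sphere1 d,
    dist (p v) (p w) = min (dist v w) (dist v (-w))
  conj : ∀ t : ℝ, ∀ v ∈ sphere1 d, Ψ t (p v) = p (Φ t v)

/-!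
Lift an `(ε, T)`-chain of the projective flow point by point: since the projective distance is the
minimum of the distances to the two antipodal lifts, each point has a lift within `ε` of the image
under `Φ` of the previous lift. Hence for `v`, `w` over `M` the chain relation on the sphere links
`v` to `w` or to `-w`. This relation is transitive and invariant under `x ↦ -x`, so the preimage
of `M` splits into the chain class of one of its points and the antipodal image of that class.
-/

section Chains

variable {X Y : Type*} [MetricSpace X] [MetricSpace Y] {Φ : ℝ → X → X} {S : Set X}

lemma ChainIn.mono {ε ε' T T' : ℝ} {x y : X} (h : ChainIn Φ S ε T x y)
    (hε : ε ≤ ε') (hT : T' ≤ T) : ChainIn Φ S ε' T' x y := by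
  obtain ⟨n, u, t, hn, hu0, hun, hmem, ht, hd⟩ := h
  exact ⟨n, u, t, hn, hu0, hun, hmem, fun i hi => hT.trans (ht i hi),
    fun i hi => (hd i hi).trans_le hε⟩

lemma chainIn_of_dist_lt {ε T s : ℝ} {a b : X} (ha : a ∈ S) (hb : b ∈ S) (hT : T ≤ s)
    (hd : dist (Φ s a) b < ε) : ChainIn Φ S ε T a b := by
  refine ⟨1, fun j => if j = 0 then a else b, fun _ => s, le_rfl, rfl, rfl, ?_,
    fun _ _ => hT, ?_⟩
  · intro i _
    dsimp only
    split_ifs <;> assumption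
  · intro i hi
    obtain rfl : i = 0 := by omega
    simpa using hd

lemma ChainIn.trans {ε T : ℝ} {x y z : X} (h₁ : ChainIn Φ S ε T x y)
    (h₂ : ChainIn Φ S ε T y z) : ChainIn Φ S ε T x z := by
  obtain ⟨n, u, t, -, hu0, hun, hmem, ht, hd⟩ := h₁
  obtain ⟨m, u', t', hm, hu0', hum', hmem', ht', hd'⟩ := h₂
  have hjoin : ∀ i, n ≤ i → (if i ≤ n then u i else u' (i - n)) = u' (i - n) := by
    intro i hi
    split_ifs with h
    · obtain rfl : i = n := by omega
      simp [hun, hu0']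
    · rfl
  refine ⟨n + m, fun i => if i ≤ n then u i else u' (i - n),
    fun i => if i < n then t i else t' (i - n), by omega, by simpa using hu0, ?_, ?_, ?_, ?_⟩
  · dsimp only
    rw [hjoin (n + m) (by omega), Nat.add_sub_cancel_left, hum']
  · intro i hi
    dsimp only
    split_ifs with h
    · exact hmem i h
    · exact hmem' (i - n) (by omega)
  · intro i hi
    dsimp only
    split_ifs with h
    · exact ht i h
    · exact ht' (i - n) (by omega)
  · intro i hi
    by_cases h : i < n
    · simpa [h, h.le, Nat.succ_le_of_lt h] using hd i h
    · have e : i + 1 - n = i - n + 1 := by omega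
      simpa [h, hjoin i (by omega), hjoin (i + 1) (by omega), e] using hd' (i - n) (by omega)

lemma OmegaIn.trans {x y z : X} (hxy : y ∈ OmegaIn Φ S x) (hyz : z ∈ OmegaIn Φ S y) :
    z ∈ OmegaIn Φ S x :=
  fun ε T hε hT => (hxy ε T hε hT).trans (hyz ε T hε hT)

variable {Ψ : ℝ → Y → Y} {S' : Set Y} {f : X → Y}

lemma ChainIn.map (hf : Isometry f) (hS : Set.MapsTo f S S')
    (hconj : ∀ t x, f (Φ t x) = Ψ t (f x)) {ε T : ℝ} {x y : X} (h : ChainIn Φ S ε T x y) :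
    ChainIn Ψ S' ε T (f x) (f y) := by
  obtain ⟨n, u, t, hn, hu0, hun, hmem, ht, hd⟩ := h
  refine ⟨n, f ∘ u, t, hn, by simp [hu0], by simp [hun], fun i hi => hS (hmem i hi), ht, ?_⟩
  intro i hi
  simpa [← hconj, hf.dist_eq] using hd i hi

lemma OmegaIn.map (hf : Isometry f) (hS : Set.MapsTo f S S')
    (hconj : ∀ t x, f (Φ t x) = Ψ t (f x)) {x y : X} (h : y ∈ OmegaIn Φ S x) :
    f y ∈ OmegaIn Ψ S' (f x) :=
  fun ε T hε hT => (h ε T hε hT).map hf hS hconj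

lemma ChainTransOn.image {A : Set X} (hf : Isometry f) (hS : Set.MapsTo f S S')
    (hconj : ∀ t x, f (Φ t x) = Ψ t (f x)) (h : ChainTransOn Φ S A) :
    ChainTransOn Ψ S' (f '' A) := by
  rintro - ⟨x, hx, rfl⟩ - ⟨y, hy, rfl⟩
  exact OmegaIn.map hf hS hconj (h x hx y hy)

end Chains

lemma exists_eq_image_union_of_rel_or_rel {α : Type*} {R : α → α → Prop}
    (hR : ∀ {a b c}, R a b → R b c → R a c)
    {σ : α → α} (hσ : Function.Involutive σ) (hRσ : ∀ {a b}, R a b → R (σ a) (σ b))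
    {A : Set α} (hA : Set.MapsTo σ A A) (hAR : ∀ a ∈ A, ∀ b ∈ A, R a b ∨ R a (σ b)) :
    ∃ C : Set α, (∀ a ∈ C, ∀ b ∈ C, R a b) ∧ A = σ '' C ∪ C := by
  rcases A.eq_empty_or_nonempty with rfl | ⟨a₀, ha₀⟩
  · exact ⟨∅, by simp, by simp⟩
  have hRσ' : ∀ {a b}, R a (σ b) → R (σ a) b := fun {_ b} h => by
    simpa [hσ b] using hRσ h
  have hRσ'' : ∀ {a b}, R (σ a) b → R a (σ b) := fun {a _} h => by
    simpa [hσ a] using hRσ h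
  refine ⟨{b | b ∈ A ∧ R a₀ b ∧ R b a₀}, fun a ha b hb => hR ha.2.2 hb.2.1, ?_⟩
  ext b
  refine ⟨fun hb => ?_, ?_⟩
  · rcases hAR a₀ ha₀ b hb with h₀b | h₀σb <;>
      rcases hAR b hb a₀ ha₀ with hb₀ | hbσ₀
    · exact Or.inr ⟨hb, h₀b, hb₀⟩
    · have hσbb : R (σ b) b := hR (hRσ' hbσ₀) h₀b
      exact Or.inr ⟨hb, h₀b, hR (hRσ'' hσbb) (hRσ' hbσ₀)⟩
    · have hσbb : R (σ b) b := hRσ' (hR hb₀ h₀σb)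
      exact Or.inr ⟨hb, hR h₀σb hσbb, hb₀⟩
    · exact Or.inl ⟨σ b, ⟨hA hb, h₀σb, hRσ' hbσ₀⟩, hσ b⟩
  · rintro (⟨c, hc, rfl⟩ | hb)
    · exact hA hc.1
    · exact hb.1

lemma neg_mem_sphere1 {d : ℕ} {v : Vec d} (hv : v ∈ sphere1 d) : -v ∈ sphere1 d := by
  simpa [sphere1] using hv

section ProjQuot

variable {d : ℕ} {P : Type*} [MetricSpace P] {p : Vec d → P}
  {Φ : ℝ → Vec d → Vec d} {Ψ : ℝ → P → P}

lemma IsProjQuot.apply_neg (hq : IsProjQuot d p Φ Ψ) {v : Vec d} (hv : v ∈ sphere1 d) :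
    p (-v) = p v :=
  (hq.fib _ (neg_mem_sphere1 hv) _ hv).mpr (Or.inr rfl)

lemma IsProjQuot.exists_lift_of_dist_lt (hq : IsProjQuot d p Φ Ψ)
    (hsph : ∀ t : ℝ, ∀ v ∈ sphere1 d, Φ t v ∈ sphere1 d) {ε t : ℝ} {a : Vec d}
    (ha : a ∈ sphere1 d) {y : P} (hy : dist (Ψ t (p a)) y < ε) :
    ∃ b ∈ sphere1 d, p b = y ∧ dist (Φ t a) b < ε := by
  obtain ⟨u, hu, rfl⟩ := hq.surj y
  rw [hq.conj _ _ ha, hq.dist_eq _ (hsph _ _ ha) _ hu] at hy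
  rcases min_lt_iff.mp hy with h | h
  · exact ⟨u, hu, rfl, h⟩
  · exact ⟨-u, neg_mem_sphere1 hu, hq.apply_neg hu, h⟩

lemma IsProjQuot.chainIn_or_chainIn_neg (hq : IsProjQuot d p Φ Ψ)
    (hsph : ∀ t : ℝ, ∀ v ∈ sphere1 d, Φ t v ∈ sphere1 d)
    {ε T : ℝ} {v w : Vec d} (hv : v ∈ sphere1 d) (hw : w ∈ sphere1 d)
    (h : ChainIn Ψ Set.univ ε T (p v) (p w)) :
    ChainIn Φ (sphere1 d) ε T v w ∨ ChainIn Φ (sphere1 d) ε T v (-w) := by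
  obtain ⟨n, q, t, hn, hq0, hqn, -, ht, hd⟩ := h
  have hlift : ∀ i, 1 ≤ i → i ≤ n →
      ∃ a ∈ sphere1 d, p a = q i ∧ ChainIn Φ (sphere1 d) ε T v a := by
    refine Nat.le_induction (fun _ => ?_) (fun i hi ih hin => ?_)
    · obtain ⟨b, hb, hpb, hdb⟩ :=
        hq.exists_lift_of_dist_lt hsph hv (y := q 1) (hq0 ▸ hd 0 (by omega))
      exact ⟨b, hb, hpb, chainIn_of_dist_lt hv hb (ht 0 (by omega)) hdb⟩
    · obtain ⟨a, ha, hpa, hva⟩ := ih (by omega)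
      obtain ⟨b, hb, hpb, hdb⟩ := hq.exists_lift_of_dist_lt hsph ha (hpa ▸ hd i (by omega))
      exact ⟨b, hb, hpb, hva.trans (chainIn_of_dist_lt ha hb (ht i (by omega)) hdb)⟩
  obtain ⟨a, ha, hpa, hva⟩ := hlift n hn le_rfl
  rcases (hq.fib _ ha _ hw).mp (hpa.trans hqn) with rfl | rfl
  · exact Or.inl hva
  · exact Or.inr (by simpa using hva)

lemma IsProjQuot.mem_omegaIn_or_neg_mem_omegaIn (hq : IsProjQuot d p Φ Ψ)
    (hsph : ∀ t : ℝ, ∀ v ∈ sphere1 d, Φ t v ∈ sphere1 d)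
    {v w : Vec d} (hv : v ∈ sphere1 d) (hw : w ∈ sphere1 d)
    (h : p w ∈ OmegaIn Ψ Set.univ (p v)) :
    w ∈ OmegaIn Φ (sphere1 d) v ∨ -w ∈ OmegaIn Φ (sphere1 d) v := by
  refine or_iff_not_imp_left.mpr fun hvw => ?_
  obtain ⟨ε₀, T₀, hε₀, -, hnot⟩ : ∃ ε₀ T₀, 0 < ε₀ ∧ 0 < T₀ ∧
      ¬ ChainIn Φ (sphere1 d) ε₀ T₀ v w := by
    simpa [OmegaIn] using hvw
  intro ε T hε hT
  -- A chain fine enough for both `(ε, T)` and `(ε₀, T₀)` cannot lift to one ending at `w`.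
  have hfine := h (min ε ε₀) (max T T₀) (lt_min hε hε₀) (lt_max_of_lt_left hT)
  rcases hq.chainIn_or_chainIn_neg hsph hv hw hfine with hc | hc
  · exact absurd (hc.mono (min_le_right _ _) (le_max_right _ _)) hnot
  · exact hc.mono (min_le_left _ _) (le_max_left _ _)

end ProjQuot

theorem stmt4_general {d : ℕ} {P : Type*} [MetricSpace P] (p : Vec d → P)
    (Φ : ℝ → Vec d → Vec d) (Ψ : ℝ → P → P)
    (hsph : ∀ t : ℝ, ∀ v ∈ sphere1 d, Φ t v ∈ sphere1 d)
    (hneg : ∀ (t : ℝ) (x : Vec d), Φ t (-x) = -Φ t x)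
    (hq : IsProjQuot d p Φ Ψ)
    (M : Set P) (hM : ChainTransOn Ψ Set.univ M) :
    ∃ Mp Mm : Set (Vec d),
      ChainTransOn Φ (sphere1 d) Mp ∧ ChainTransOn Φ (sphere1 d) Mm ∧
      {v | v ∈ sphere1 d ∧ p v ∈ M} = Mp ∪ Mm ∧
      Mp = (fun x : Vec d => -x) '' Mm := by
  have hnegMaps : Set.MapsTo (fun x : Vec d => -x) (sphere1 d) (sphere1 d) :=
    fun _ => neg_mem_sphere1
  have hnegConj : ∀ t (x : Vec d), -Φ t x = Φ t (-x) := fun t x => (hneg t x).symm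
  obtain ⟨C, hC, hsplit⟩ := exists_eq_image_union_of_rel_or_rel
    (R := fun v w => w ∈ OmegaIn Φ (sphere1 d) v) (σ := fun x : Vec d => -x)
    (A := {v | v ∈ sphere1 d ∧ p v ∈ M})
    OmegaIn.trans neg_neg (OmegaIn.map isometry_neg hnegMaps hnegConj)
    (fun v hv => ⟨neg_mem_sphere1 hv.1, (hq.apply_neg hv.1).symm ▸ hv.2⟩)
    (fun v hv w hw => hq.mem_omegaIn_or_neg_mem_omegaIn hsph hv.1 hw.1 (hM _ hv.2 _ hw.2))
  exact ⟨_, C, ChainTransOn.image isometry_neg hnegMaps hnegConj hC, hC, hsplit, rfl⟩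

theorem stmt4 {d : ℕ} {P : Type*} [MetricSpace P] (p : Vec d → P)
    (Φ : ℝ → Vec d → Vec d) (Ψ : ℝ → P → P)
    (hΦ : IsFlow Φ) (hΨ : IsFlow Ψ)
    (hsph : ∀ t : ℝ, ∀ v ∈ sphere1 d, Φ t v ∈ sphere1 d)
    (hneg : ∀ (t : ℝ) (x : Vec d), Φ t (-x) = -Φ t x)
    (hq : IsProjQuot d p Φ Ψ)
    (M : Set P) (hM : ChainTransOn Ψ Set.univ M) :
    ∃ Mp Mm : Set (Vec d),
      ChainTransOn Φ (sphere1 d) Mp ∧ ChainTransOn Φ (sphere1 d) Mm ∧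
      {v | v ∈ sphere1 d ∧ p v ∈ M} = Mp ∪ Mm ∧
      Mp = (fun x : Vec d => -x) '' Mm :=
  stmt4_general p Φ Ψ hsph hneg hq M hM
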